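/- arXiv:math/9402209 — 5 statements merged into one kernel-verified Lean document; each statement's English description precedes it below -/
import Mathlib

section
/- Let n ≥ 1 and N be natural numbers, let E be a complex normed vector space with dim E = n, let ε > 0, and let T : ℓ₂^N → E be a bounded linear map, where ℓ₂^N is the N-dimensional complex Euclidean space with standard orthonormal basis (e_i)_{i≤N}. Then the number of indices i ≤ N with ‖T e_i‖ > ε is at most n³‖T‖²/ε². -/
/-!
Let `P` be the orthogonal projection onto `(ker T)ᗮ`, a space of dimension `rank T ≤ n`.
Since `T = T ∘ P`, `∑ᵢ ‖T eᵢ‖² ≤ ‖T‖² ∑ᵢ ‖P eᵢ‖² = ‖T‖² · tr P = ‖T‖² · rank T`, and Markov's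
inequality then bounds the number of `i` with `‖T eᵢ‖² > ε²` by `n ‖T‖² / ε² ≤ n³ ‖T‖² / ε²`.
-/

open scoped InnerProductSpace

open Module Finset

section

variable {𝕜 F E : Type*} [RCLike 𝕜] [NormedAddCommGroup F] [InnerProductSpace 𝕜 F]
  [NormedAddCommGroup E] [NormedSpace 𝕜 E]

theorem OrthonormalBasis.sum_norm_sq_starProjection {ι : Type*} [Fintype ι]
    (b : OrthonormalBasis ι 𝕜 F) (K : Submodule 𝕜 F) [FiniteDimensional 𝕜 K] :
    ∑ i, ‖K.starProjection (b i)‖ ^ 2 = finrank 𝕜 K := by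
  let c := stdOrthonormalBasis 𝕜 K
  calc ∑ i, ‖K.starProjection (b i)‖ ^ 2
      = ∑ i, ∑ k, ‖⟪(c k : F), b i⟫_𝕜‖ ^ 2 := by
        refine sum_congr rfl fun i _ => ?_
        rw [Submodule.starProjection_apply, Submodule.norm_coe, ← c.sum_sq_norm_inner_right]
        simp_rw [Submodule.inner_orthogonalProjectionOnto_eq_of_mem_left]
    _ = ∑ k, ∑ i, ‖⟪b i, (c k : F)⟫_𝕜‖ ^ 2 := by
        rw [sum_comm]; simp_rw [norm_inner_symm]
    _ = finrank 𝕜 K := by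
        simp [b.sum_sq_norm_inner_right, Submodule.norm_coe, c.orthonormal.1 _]

theorem LinearMap.finrank_orthogonal_ker [FiniteDimensional 𝕜 F] (f : F →ₗ[𝕜] E) :
    finrank 𝕜 f.kerᗮ = finrank 𝕜 f.range := by
  have h₁ := Submodule.finrank_add_finrank_orthogonal f.ker
  have h₂ := f.finrank_range_add_finrank_ker
  omega

theorem ContinuousLinearMap.norm_apply_le_opNorm_mul_norm_starProjection
    [FiniteDimensional 𝕜 F] (T : F →L[𝕜] E) (x : F) :
    ‖T x‖ ≤ ‖T‖ * ‖T.kerᗮ.starProjection x‖ := by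
  set K := T.ker
  have hT : T x = T (Kᗮ.starProjection x) := by
    have hker := Kᗮ.sub_starProjection_mem_orthogonal x
    rw [K.orthogonal_orthogonal] at hker
    rwa [← sub_eq_zero, ← map_sub]
  rw [hT]
  exact T.le_opNorm _

theorem OrthonormalBasis.sum_norm_apply_sq_le [FiniteDimensional 𝕜 F] {ι : Type*} [Fintype ι]
    (b : OrthonormalBasis ι 𝕜 F) (T : F →L[𝕜] E) :
    ∑ i, ‖T (b i)‖ ^ 2 ≤ finrank 𝕜 T.range * ‖T‖ ^ 2 := by
  set K := T.kerᗮ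
  calc ∑ i, ‖T (b i)‖ ^ 2 ≤ ∑ i, ‖T‖ ^ 2 * ‖K.starProjection (b i)‖ ^ 2 := by
        gcongr with i
        rw [← mul_pow]
        gcongr
        exact T.norm_apply_le_opNorm_mul_norm_starProjection _
    _ = finrank 𝕜 T.range * ‖T‖ ^ 2 := by
        rw [← mul_sum, b.sum_norm_sq_starProjection, LinearMap.finrank_orthogonal_ker, mul_comm]

theorem Finset.card_filter_lt_mul_le_sum {ι : Type*} (s : Finset ι) (f : ι → ℝ)
    (hf : ∀ i ∈ s, 0 ≤ f i) (c : ℝ) :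
    #(s.filter (c < f ·)) * c ≤ ∑ i ∈ s, f i :=
  calc #(s.filter (c < f ·)) * c ≤ ∑ i ∈ s.filter (c < f ·), f i := by
        simpa using card_nsmul_le_sum _ f c fun i hi => (mem_filter.mp hi).2.le
    _ ≤ ∑ i ∈ s, f i :=
        sum_le_sum_of_subset_of_nonneg (filter_subset _ _) fun i hi _ => hf i hi

end

/-- If `E` is an `n`-dimensional complex normed space (`n ≥ 1`), `ε > 0` and
`T : ℓ₂^N → E` is a bounded linear map, then the number of standard basis vectors `e_i`
with `‖T e_i‖ > ε` is at most `n³ ‖T‖² / ε²`. -/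
theorem lemma2_count_bound (n N : ℕ) (hn : 1 ≤ n)
    (E : Type*) [NormedAddCommGroup E] [NormedSpace ℂ E]
    (hE : Module.finrank ℂ E = n)
    (ε : ℝ) (hε : 0 < ε)
    (T : EuclideanSpace ℂ (Fin N) →L[ℂ] E) :
    ((Finset.univ.filter fun i : Fin N =>
        ε < ‖T (EuclideanSpace.single i (1 : ℂ))‖).card : ℝ)
      ≤ (n : ℝ) ^ 3 * ‖T‖ ^ 2 / ε ^ 2 := by
  have : FiniteDimensional ℂ E := Module.finite_of_finrank_pos (hE ▸ hn)
  let e := EuclideanSpace.basisFun (Fin N) ℂ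
  have hsq : ∀ i, ε < ‖T (EuclideanSpace.single i 1)‖ ↔ ε ^ 2 < ‖T (e i)‖ ^ 2 := fun i => by
    rw [EuclideanSpace.basisFun_apply, pow_lt_pow_iff_left₀ hε.le (norm_nonneg _) two_ne_zero]
  have hrange : (finrank ℂ T.range : ℝ) ≤ n ^ 3 := by
    rw [← hE]
    exact_mod_cast (Submodule.finrank_le _).trans (Nat.le_self_pow three_ne_zero _)
  rw [le_div_iff₀ (by positivity), filter_congr fun i _ => hsq i]
  calc _ ≤ ∑ i, ‖T (e i)‖ ^ 2 := card_filter_lt_mul_le_sum _ _ (fun _ _ => by positivity) _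
    _ ≤ finrank ℂ T.range * ‖T‖ ^ 2 := e.sum_norm_apply_sq_le T
    _ ≤ n ^ 3 * ‖T‖ ^ 2 := by gcongr
end

section
/- For every n ≥ 1, every ε > 0 and every K > 0 there exists N₀ ∈ ℕ with the following property: for every N > N₀ and every linear map T : T_N → T_N with operator norm ‖T‖ ≤ K, there exist indices σ(1) < ψ(1) < σ(2) < ψ(2) < ⋯ < σ(n) < ψ(n) in {1, …, N} and a scalar λ ∈ ℂ such that for every A ∈ T_n, ‖C(T(J(A))) − λ A‖ ≤ ε ‖A‖, where J(A) ∈ T_N is the matrix with (J(A))(σ(i), ψ(j)) = A(i,j) for all 1 ≤ i ≤ j ≤ n and all other entries 0, and for B ∈ T_N, C(B) ∈ T_n is the matrix with (C(B))(i,j) = B(σ(i), ψ(j)). -/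
/-!
Write `T(E_ab)_pq` for the coefficients of `T` on the matrix units. These are bounded by `K`, so
after discretising them at scale `η`, Ramsey's theorem for `4`-tuples yields a long chain of indices
on which the coefficient of a tuple depends, up to `η`, only on its order type. Cut the chain into
`2n` blocks of `m` consecutive indices and let `σ i`, `ψ j` be the first elements of the blocks `2i`
and `2j + 1`. All diagonal coefficients `T(E_{σi ψj})_{σi ψj}` have the order type of
`(σ 0, ψ 0, σ 0, ψ 0)`, so they are `η`-close to `λ := T(E_{σ0 ψ0})_{σ0 ψ0}`. In an off-diagonal
coefficient one of the last two indices is alone in its block; sliding it through the block keeps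
the order type and produces `m` nearly equal entries of one row or column of `T(E_ab)`, whose
squares sum to at most `K ^ 2`, so all of them are `O(η + K / √m)`. Summing the `n ^ 4` coefficient
errors bounds `‖C (T (J A)) - λ A‖`.
-/

open scoped Matrix.Norms.L2Operator

/-- The space `T_N` of upper triangular `N × N` complex matrices, as a subspace of the
`N × N` matrices (the latter carrying the operator norm on Euclidean space `ℂ^N`). -/
noncomputable def upperTriangular (N : ℕ) : Submodule ℂ (Matrix (Fin N) (Fin N) ℂ) where
  carrier := {A | ∀ i j : Fin N, j < i → A i j = 0}
  add_mem' := by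
    intro A B hA hB i j hij
    simp [Matrix.add_apply, hA i j hij, hB i j hij]
  zero_mem' := by intro i j hij; simp
  smul_mem' := by
    intro c A hA i j hij
    simp [Matrix.smul_apply, hA i j hij]

/-- The map `J` determined by `σ`, `ψ`: `(J A)(σ i, ψ j) = A i j` for `i ≤ j`,
all other entries `0`. -/
noncomputable def Jmap {n N : ℕ} (σ ψ : Fin n → Fin N)
    (A : Matrix (Fin n) (Fin n) ℂ) : Matrix (Fin N) (Fin N) ℂ :=
  Matrix.of fun p q =>
    ∑ i : Fin n, ∑ j : Fin n, if i ≤ j ∧ p = σ i ∧ q = ψ j then A i j else 0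

/-- The compression map `C` determined by `σ`, `ψ`: `(C B) i j = B (σ i) (ψ j)`. -/
noncomputable def Cmap {n N : ℕ} (σ ψ : Fin n → Fin N)
    (B : Matrix (Fin N) (Fin N) ℂ) : Matrix (Fin n) (Fin n) ℂ :=
  Matrix.of fun i j => B (σ i) (ψ j)

open Finset Function

universe u

section Ramsey

variable {κ : Type*}

/-- The arrow relation `N → (m)^r_κ` of Erdős and Rado. -/
def RamseyArrow (κ : Type*) (N m r : ℕ) : Prop :=
  ∀ {α : Type u} [LinearOrder α] (S : Finset α) (f : Finset α → κ), N ≤ #S →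
    ∃ M ⊆ S, #M = m ∧ ∃ c, ∀ t ⊆ M, #t = r → f t = c

lemma ramseyArrow_zero (m : ℕ) : RamseyArrow.{u} κ m m 0 := by
  intro α _ S f hS
  obtain ⟨M, hMS, hM⟩ := exists_subset_card_eq hS
  exact ⟨M, hMS, hM, f ∅, fun t _ ht => by rw [card_eq_zero.mp ht]⟩

lemma exists_endHomogeneous {r : ℕ} (hr : ∀ m, ∃ N, RamseyArrow.{u} κ N m r) (L : ℕ) :
    ∃ N, ∀ {α : Type u} [LinearOrder α] (S : Finset α) (f : Finset α → κ), N ≤ #S →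
      ∃ T ⊆ S, #T = L ∧ ∃ c : α → κ,
        ∀ a ∈ T, ∀ s ⊆ T.filter (a < ·), #s = r → f (insert a s) = c a := by
  induction L with
  | zero => exact ⟨0, fun S f _ => ⟨∅, empty_subset _, rfl, fun _ => f ∅, by simp⟩⟩
  | succ L ih =>
    obtain ⟨NL, hNL⟩ := ih
    obtain ⟨NR, hNR⟩ := hr NL
    refine ⟨NR + 1, fun S f hS => ?_⟩
    have hSne : S.Nonempty := card_pos.mp (by omega)
    set a := S.min' hSne
    obtain ⟨B, hBS, hB, ca, hca⟩ :=
      hNR (S.erase a) (fun s => f (insert a s)) (by rw [card_erase_of_mem (S.min'_mem hSne)]; omega)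
    obtain ⟨T, hTB, hT, c, hc⟩ := hNL B f hB.ge
    have ha_lt : ∀ b ∈ T, a < b := fun b hb =>
      S.min'_lt_of_mem_erase_min' hSne (hBS (hTB hb))
    have haT : a ∉ T := fun h => lt_irrefl a (ha_lt a h)
    refine ⟨insert a T, insert_subset (S.min'_mem hSne) fun b hb => mem_of_mem_erase (hBS (hTB hb)),
      by rw [card_insert_of_notMem haT, hT], update c a ca, ?_⟩
    intro b hb s hs hsr
    rcases mem_insert.mp hb with rfl | hb
    · rw [update_self]
      refine hca s (fun z hz => hTB ?_) hsr
      have := mem_filter.mp (hs hz)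
      exact (mem_insert.mp this.1).resolve_left (ne_of_gt this.2)
    · rw [update_of_ne (ne_of_gt (ha_lt b hb))]
      refine hc b hb s (fun z hz => ?_) hsr
      have := mem_filter.mp (hs hz)
      refine mem_filter.mpr ⟨(mem_insert.mp this.1).resolve_left ?_, this.2⟩
      rintro rfl
      exact lt_asymm (ha_lt b hb) this.2

lemma exists_ramseyArrow_succ [Finite κ] {r : ℕ} (hr : ∀ m, ∃ N, RamseyArrow.{u} κ N m r)
    (m : ℕ) : ∃ N, RamseyArrow.{u} κ N m (r + 1) := by
  classical
  have := Fintype.ofFinite κ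
  obtain ⟨N, hN⟩ := exists_endHomogeneous hr (Fintype.card κ * m)
  refine ⟨N, fun S f hS => ?_⟩
  obtain ⟨T, hTS, hT, c, hc⟩ := hN S f hS
  obtain ⟨k, -, hk⟩ := exists_le_card_fiber_of_mul_le_card_of_maps_to (s := T) (t := univ) (f := c)
    (fun a _ => mem_univ (c a)) ⟨f ∅, mem_univ _⟩ (by rw [card_univ, hT])
  obtain ⟨M, hMT, hM⟩ := exists_subset_card_eq hk
  refine ⟨M, fun z hz => hTS (mem_filter.mp (hMT hz)).1, hM, k, fun t ht htr => ?_⟩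
  have htne : t.Nonempty := card_pos.mp (by omega)
  obtain ⟨hbT, hbk⟩ := mem_filter.mp (hMT (ht (t.min'_mem htne)))
  rw [← insert_erase (t.min'_mem htne), hc _ hbT, hbk]
  · intro z hz
    exact mem_filter.mpr ⟨(mem_filter.mp (hMT (ht (mem_of_mem_erase hz)))).1,
      t.min'_lt_of_mem_erase_min' htne hz⟩
  · rw [card_erase_of_mem (t.min'_mem htne), htr, Nat.add_sub_cancel]

theorem exists_ramseyArrow [Finite κ] (m r : ℕ) : ∃ N, RamseyArrow.{u} κ N m r := by
  induction r generalizing m with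
  | zero => exact ⟨m, ramseyArrow_zero m⟩
  | succ r ih => exact exists_ramseyArrow_succ ih m

end Ramsey

section OrderType

def SameOrderType {ι α β : Type*} [LT α] [LT β] (x : ι → α) (y : ι → β) : Prop :=
  ∀ u v, x u < x v ↔ y u < y v

variable {ι α β γ δ : Type*}

lemma SameOrderType.symm [LT α] [LT β] {x : ι → α} {y : ι → β} (h : SameOrderType x y) :
    SameOrderType y x := fun u v => (h u v).symm

lemma SameOrderType.trans [LT α] [LT β] [LT γ] {x : ι → α} {y : ι → β} {z : ι → γ}
    (h : SameOrderType x y) (h' : SameOrderType y z) : SameOrderType x z := fun u v =>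
  (h u v).trans (h' u v)

lemma SameOrderType.eq_iff [LinearOrder α] [LinearOrder β] {x : ι → α} {y : ι → β}
    (h : SameOrderType x y) (u v : ι) : x u = x v ↔ y u = y v := by
  rw [← not_iff_not, ← ne_eq, ← ne_eq, ← lt_or_lt_iff_ne, ← lt_or_lt_iff_ne, h u v, h v u]

lemma SameOrderType.comp [LinearOrder α] [LinearOrder β] [LinearOrder γ] [LinearOrder δ]
    {x : ι → α} {y : ι → β} (h : SameOrderType x y) {f : α → γ} {g : β → δ} (hf : StrictMono f)
    (hg : StrictMono g) : SameOrderType (f ∘ x) (g ∘ y) := fun u v => by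
  simp only [comp_apply, hf.lt_iff_lt, hg.lt_iff_lt, h u v]

lemma exists_strictMono_comp_surjective [Fintype ι] [LinearOrder α] (x : ι → α) :
    ∃ (r : ℕ) (e : Fin r → α) (τ : ι → Fin r), StrictMono e ∧ Surjective τ ∧ e ∘ τ = x := by
  classical
  set s := univ.image x
  refine ⟨#s, s.orderEmbOfFin rfl, fun v => (s.orderIsoOfFin rfl).symm ⟨x v, by simp [s]⟩,
    (s.orderEmbOfFin rfl).strictMono, fun i => ?_, ?_⟩
  · obtain ⟨v, -, hv⟩ := mem_image.mp (s.orderEmbOfFin_mem rfl i)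
    refine ⟨v, (OrderIso.symm_apply_eq _).mpr (Subtype.ext ?_)⟩
    simp [hv]
  · funext v
    simp [← coe_orderIsoOfFin_apply]

lemma SameOrderType.exists_strictMono_comp [Preorder γ] [LinearOrder α] [LinearOrder β]
    {x : ι → α} {y : ι → β} (h : SameOrderType x y) {e : γ → α} {τ : ι → γ} (he : StrictMono e)
    (hτ : Surjective τ) (hx : e ∘ τ = x) : ∃ e' : γ → β, StrictMono e' ∧ e' ∘ τ = y := by
  have hxτ : ∀ i, x (surjInv hτ i) = e i := fun i => by
    rw [← hx, comp_apply, surjInv_eq hτ]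
  refine ⟨y ∘ surjInv hτ, fun i j hij => (h _ _).mp ?_, funext fun v => ?_⟩
  · simpa [hxτ] using he hij
  · exact (h.eq_iff _ _).mp (by rw [hxτ, ← hx, comp_apply])

end OrderType

section PatternRamsey

variable {κ : Type*} {d : ℕ}

def patternColoring {α : Type*} [LinearOrder α] (φ : (Fin d → α) → κ) (r : ℕ) (s : Finset α) :
    Option ((Fin d → Fin r) → κ) :=
  if h : #s = r then some fun τ => φ (s.orderEmbOfFin h ∘ τ) else none

lemma comp_eq_of_patternColoring_eq {α : Type*} [LinearOrder α] {φ : (Fin d → α) → κ} {r : ℕ}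
    {M : Finset α} {c : Option ((Fin d → Fin r) → κ)}
    (hM : ∀ t ⊆ M, #t = r → patternColoring φ r t = c) {e e' : Fin r → α} (he : StrictMono e)
    (he' : StrictMono e') (heM : ∀ i, e i ∈ M) (he'M : ∀ i, e' i ∈ M) (τ : Fin d → Fin r) :
    φ (e ∘ τ) = φ (e' ∘ τ) := by
  classical
  have key : ∀ f : Fin r → α, StrictMono f → (∀ i, f i ∈ M) →
      c = some fun τ => φ (f ∘ τ) := by
    intro f hf hfM
    have hcard : #(univ.image f) = r := by simp [card_image_of_injective _ hf.injective]
    rw [← hM _ (by simpa [subset_iff] using hfM) hcard, patternColoring, dif_pos hcard,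
      ← orderEmbOfFin_unique hcard (by simp) hf]
  exact congrFun (Option.some_injective _ ((key e he heM).symm.trans (key e' he' he'M))) τ

lemma exists_patternHomogeneous [Finite κ] (d m R : ℕ) :
    ∃ N, ∀ {α : Type u} [LinearOrder α] (S : Finset α) (φ : (Fin d → α) → κ), N ≤ #S →
      ∃ M ⊆ S, #M = m ∧ ∀ r < R, ∀ e e' : Fin r → α, StrictMono e → StrictMono e' →
        (∀ i, e i ∈ M) → (∀ i, e' i ∈ M) → ∀ τ, φ (e ∘ τ) = φ (e' ∘ τ) := by
  induction R generalizing m with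
  | zero =>
    refine ⟨m, fun S φ hS => ?_⟩
    obtain ⟨M, hMS, hM⟩ := exists_subset_card_eq hS
    exact ⟨M, hMS, hM, by simp⟩
  | succ R ih =>
    obtain ⟨N', hN'⟩ := ih m
    obtain ⟨N, hN⟩ := exists_ramseyArrow.{u} (κ := Option ((Fin d → Fin R) → κ)) N' R
    refine ⟨N, fun S φ hS => ?_⟩
    obtain ⟨M₁, hM₁S, hM₁, c, hc⟩ := hN S (patternColoring φ R) hS
    obtain ⟨M, hMM₁, hM, hhom⟩ := hN' M₁ φ hM₁.ge
    refine ⟨M, hMM₁.trans hM₁S, hM, fun r hr e e' he he' heM he'M => ?_⟩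
    rcases Nat.lt_succ_iff_lt_or_eq.mp hr with hr | rfl
    · exact hhom r hr e e' he he' heM he'M
    · exact comp_eq_of_patternColoring_eq hc he he' (fun i => hMM₁ (heM i)) (fun i => hMM₁ (he'M i))

theorem exists_orderInvariant_embedding (β : Type*) [LinearOrder β] [Fintype β] [Finite κ]
    (d : ℕ) : ∃ N₀, ∀ N, N₀ ≤ N → ∀ φ : (Fin d → Fin N) → κ, ∃ P : β ↪o Fin N,
      ∀ x y : Fin d → β, SameOrderType x y → φ (P ∘ x) = φ (P ∘ y) := by
  obtain ⟨N₀, hN₀⟩ := exists_patternHomogeneous.{0} (κ := κ) d (Fintype.card β) (d + 1)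
  refine ⟨N₀, fun N hN φ => ?_⟩
  obtain ⟨M, -, hM, hhom⟩ := hN₀ univ φ (by simpa using hN)
  set P := (Fintype.orderIsoFinOfCardEq β rfl).symm.toOrderEmbedding.trans (M.orderEmbOfFin hM)
  have hPM : ∀ b, P b ∈ M := fun b => M.orderEmbOfFin_mem hM _
  refine ⟨P, fun x y hxy => ?_⟩
  obtain ⟨r, e, τ, he, hτ, rfl⟩ := exists_strictMono_comp_surjective x
  obtain ⟨e', he', rfl⟩ := hxy.exists_strictMono_comp he hτ rfl
  have hr : r < d + 1 := Nat.lt_succ_of_le (by simpa using Fintype.card_le_of_surjective τ hτ)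
  exact hhom r hr (P ∘ e) (P ∘ e') ((OrderEmbedding.strictMono P).comp he)
    ((OrderEmbedding.strictMono P).comp he') (fun i => hPM _) (fun i => hPM _) τ

end PatternRamsey

theorem IsCompact.exists_finite_coloring {X : Type*} [PseudoMetricSpace X] {S : Set X}
    (hS : IsCompact S) {η : ℝ} (hη : 0 < η) :
    ∃ (t : Finset X) (c : X → Option t), ∀ x ∈ S, ∀ y ∈ S, c x = c y → dist x y < η := by
  classical
  obtain ⟨t, -, ht, hcover⟩ := finite_cover_balls_of_compact hS (half_pos hη)
  let c : X → Option ht.toFinset := fun x =>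
    if h : ∃ z ∈ ht.toFinset, dist x z < η / 2 then some ⟨h.choose, h.choose_spec.1⟩ else none
  have hc : ∀ x ∈ S, ∃ h : ∃ z ∈ ht.toFinset, dist x z < η / 2,
      c x = some ⟨h.choose, h.choose_spec.1⟩ := fun x hx =>
    have h : ∃ z ∈ ht.toFinset, dist x z < η / 2 := by simpa using hcover hx
    ⟨h, dif_pos h⟩
  refine ⟨ht.toFinset, c, fun x hx y hy hxy => ?_⟩
  obtain ⟨hx', hcx⟩ := hc x hx
  obtain ⟨hy', hcy⟩ := hc y hy
  have hxy' : hx'.choose = hy'.choose := by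
    simpa using hcx.symm.trans (hxy.trans hcy)
  calc dist x y ≤ dist x hx'.choose + dist y hy'.choose := by
        rw [hxy']; exact dist_triangle_right x y _
    _ < η / 2 + η / 2 := add_lt_add hx'.choose_spec.2 hy'.choose_spec.2
    _ = η := add_halves η

theorem exists_almost_orderInvariant_embedding {X : Type*} [PseudoMetricSpace X] {S : Set X}
    (hS : IsCompact S) {η : ℝ} (hη : 0 < η) (β : Type*) [LinearOrder β] [Fintype β] (d : ℕ) :
    ∃ N₀, ∀ N, N₀ ≤ N → ∀ F : (Fin d → Fin N) → X, (∀ x, F x ∈ S) → ∃ P : β ↪o Fin N,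
      ∀ x y : Fin d → β, SameOrderType x y → dist (F (P ∘ x)) (F (P ∘ y)) < η := by
  obtain ⟨t, c, hc⟩ := hS.exists_finite_coloring hη
  obtain ⟨N₀, hN₀⟩ := exists_orderInvariant_embedding (κ := Option t) β d
  refine ⟨N₀, fun N hN F hF => ?_⟩
  obtain ⟨P, hP⟩ := hN₀ N hN (c ∘ F)
  exact ⟨P, fun x y hxy => hc _ (hF _) _ (hF _) (hP x y hxy)⟩

section MatrixNorm

open Matrix
open scoped Matrix.Norms.L2Operator

variable {𝕜 : Type*} [RCLike 𝕜] {m n ι : Type*} [Fintype m] [Fintype n] [Fintype ι]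

lemma Matrix.sum_norm_sq_apply_col_le [DecidableEq n] (B : Matrix m n 𝕜) {f : ι → m}
    (hf : Injective f) (s : n) : ∑ t, ‖B (f t) s‖ ^ 2 ≤ ‖B‖ ^ 2 := by
  classical
  have hB := B.l2_opNorm_mulVec (EuclideanSpace.single s 1)
  rw [PiLp.norm_single, norm_one, mul_one] at hB
  calc ∑ t, ‖B (f t) s‖ ^ 2 = ∑ r ∈ univ.image f, ‖B r s‖ ^ 2 :=
        (sum_image (f := fun r => ‖B r s‖ ^ 2) fun _ _ _ _ h => hf h).symm
    _ ≤ ∑ r, ‖B r s‖ ^ 2 := sum_le_univ_sum_of_nonneg fun _ => by positivity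
    _ = ‖(EuclideanSpace.equiv m 𝕜).symm (B *ᵥ EuclideanSpace.single s 1)‖ ^ 2 := by
        rw [EuclideanSpace.norm_sq_eq]
        simp
    _ ≤ ‖B‖ ^ 2 := by gcongr

lemma Matrix.sum_norm_sq_apply_row_le [DecidableEq m] [DecidableEq n] (B : Matrix m n 𝕜)
    (r : m) {f : ι → n} (hf : Injective f) : ∑ t, ‖B r (f t)‖ ^ 2 ≤ ‖B‖ ^ 2 := by
  simpa [← l2_opNorm_conjTranspose B] using Bᴴ.sum_norm_sq_apply_col_le hf r

lemma Matrix.norm_apply_le [DecidableEq n] (B : Matrix m n 𝕜) (r : m) (s : n) :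
    ‖B r s‖ ≤ ‖B‖ := by
  have := B.sum_norm_sq_apply_col_le (f := fun _ : Unit => r) (fun _ _ _ => rfl) s
  exact pow_le_pow_iff_left₀ (norm_nonneg _) (norm_nonneg _) two_ne_zero |>.mp (by simpa using this)

lemma Matrix.single_eq_diagonal_mul_permMatrix [DecidableEq n] (p q : n) (c : 𝕜) :
    single p q c = diagonal (Pi.single p c) * (Equiv.swap p q).permMatrix 𝕜 := by
  ext i j
  rcases eq_or_ne i p with rfl | hi
  · by_cases hj : j = q <;> simp [single_apply, hj]
  · simp [hi, hi.symm]

lemma Matrix.norm_single_le [DecidableEq n] (p q : n) (c : 𝕜) : ‖single p q c‖ ≤ ‖c‖ := by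
  rw [single_eq_diagonal_mul_permMatrix]
  calc _ ≤ ‖(diagonal (Pi.single p c) : Matrix n n 𝕜)‖ * ‖(Equiv.swap p q).permMatrix 𝕜‖ :=
        l2_opNorm_mul _ _
    _ ≤ ‖c‖ * 1 := by
        rw [l2_opNorm_diagonal, Pi.norm_single]
        gcongr
        exact permMatrix_l2_opNorm_le _
    _ = ‖c‖ := mul_one _

lemma Matrix.norm_le_sum_norm_apply [DecidableEq n] (B : Matrix n n 𝕜) :
    ‖B‖ ≤ ∑ r, ∑ s, ‖B r s‖ := by
  conv_lhs => rw [matrix_eq_sum_single B]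
  exact (norm_sum_le _ _).trans <| sum_le_sum fun r _ =>
    (norm_sum_le _ _).trans <| sum_le_sum fun s _ => norm_single_le r s _

end MatrixNorm

section Interlacing

def Interlacing {n : ℕ} {γ : Type*} [LT γ] (σ ψ : Fin n → γ) : Prop :=
  (∀ i, σ i < ψ i) ∧ ∀ i j, i < j → ψ i < σ j

variable {n : ℕ} {γ δ : Type*} [Preorder γ] {σ ψ : Fin n → γ}

lemma Interlacing.lt_of_le (h : Interlacing σ ψ) {i j : Fin n} (hij : i ≤ j) : σ i < ψ j := by
  rcases hij.lt_or_eq with hij | rfl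
  · exact (h.1 i).trans ((h.2 i j hij).trans (h.1 j))
  · exact h.1 i

lemma Interlacing.strictMono_left (h : Interlacing σ ψ) : StrictMono σ := fun i j hij =>
  (h.1 i).trans (h.2 i j hij)

lemma Interlacing.strictMono_right (h : Interlacing σ ψ) : StrictMono ψ := fun i j hij =>
  (h.2 i j hij).trans (h.1 j)

lemma Interlacing.ne (h : Interlacing σ ψ) (i j : Fin n) : σ i ≠ ψ j := by
  rcases le_or_gt i j with hij | hji
  · exact (h.lt_of_le hij).ne
  · exact (h.2 j i hji).ne'

lemma Interlacing.exists_lone_index (h : Interlacing σ ψ) {i j k l : Fin n}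
    (hne : i ≠ k ∨ j ≠ l) :
    ∃ p : Fin 4, (p = 2 ∨ p = 3) ∧ ∀ v ≠ p, ![σ i, ψ j, σ k, ψ l] v ≠ ![σ i, ψ j, σ k, ψ l] p := by
  by_cases hjl : j = l
  · subst hjl
    have hik := hne.resolve_right (not_not.mpr rfl)
    refine ⟨2, Or.inl rfl, fun v hv => ?_⟩
    fin_cases v
    · exact h.strictMono_left.injective.ne hik
    · exact (h.ne k j).symm
    · exact absurd rfl hv
    · exact (h.ne k j).symm
  · refine ⟨3, Or.inr rfl, fun v hv => ?_⟩
    fin_cases v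
    · exact h.ne i l
    · exact h.strictMono_right.injective.ne hjl
    · exact h.ne k l
    · exact absurd rfl hv

lemma Interlacing.comp [Preorder δ] (h : Interlacing σ ψ) {f : γ → δ} (hf : StrictMono f) :
    Interlacing (f ∘ σ) (f ∘ ψ) :=
  ⟨fun i => hf (h.1 i), fun i j hij => hf (h.2 i j hij)⟩

lemma interlacing_two_mul (n : ℕ) :
    Interlacing (fun i : Fin n => (⟨2 * i, by omega⟩ : Fin (2 * n)))
      (fun i => ⟨2 * i + 1, by omega⟩) :=
  ⟨fun i => Fin.mk_lt_mk.mpr (by omega), fun i j hij => Fin.mk_lt_mk.mpr (by omega)⟩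

end Interlacing

lemma sameOrderType_toLex {ι α β : Type*} [LinearOrder α] [Preorder β] (b : ι → α)
    {o o' : ι → β} (h : ∀ u v, b u = b v → (o u < o v ↔ o' u < o' v)) :
    SameOrderType (fun v => toLex (b v, o v)) (fun v => toLex (b v, o' v)) := fun u v => by
  simp only [Prod.Lex.toLex_lt_toLex]
  exact or_congr_right (and_congr_right (h u v))

lemma sameOrderType_vec_abab {α β : Type*} [LinearOrder α] [LinearOrder β] {a b : α} {a' b' : β}
    (h : a < b) (h' : a' < b') : SameOrderType ![a, b, a, b] ![a', b', a', b'] := by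
  intro u v
  fin_cases u <;> fin_cases v <;> simp [h, h', h.not_gt, h'.not_gt]

lemma norm_le_two_mul_of_sum_sq_le {ι E : Type*} [Fintype ι] [SeminormedAddCommGroup E]
    {v : ι → E} {η : ℝ} (hv : ∀ s t, ‖v s - v t‖ ≤ η)
    (hsum : ∑ t, ‖v t‖ ^ 2 ≤ Fintype.card ι * η ^ 2) (t : ι) : ‖v t‖ ≤ 2 * η := by
  have hη : 0 ≤ η := by simpa using hv t t
  obtain ⟨t₀, -, ht₀⟩ := exists_le_of_sum_le (univ_nonempty_iff.mpr ⟨t⟩)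
    (hsum.trans_eq (by simp) : ∑ t, ‖v t‖ ^ 2 ≤ ∑ _t : ι, η ^ 2)
  have ht₀' : ‖v t₀‖ ≤ η := (pow_le_pow_iff_left₀ (norm_nonneg _) hη two_ne_zero).mp ht₀
  calc ‖v t‖ = ‖(v t - v t₀) + v t₀‖ := by rw [sub_add_cancel]
    _ ≤ ‖v t - v t₀‖ + ‖v t₀‖ := norm_add_le _ _
    _ ≤ η + η := add_le_add (hv t t₀) ht₀'
    _ = 2 * η := (two_mul η).symm

namespace upperTriangular

variable {n N : ℕ}

noncomputable def single (a b : Fin N) : upperTriangular N :=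
  if h : a ≤ b then
    ⟨Matrix.single a b 1, fun i j hji => by
      rw [Matrix.single_apply, if_neg]
      rintro ⟨rfl, rfl⟩
      exact hji.not_ge h⟩
  else 0

lemma norm_single_le (a b : Fin N) : ‖single a b‖ ≤ 1 := by
  unfold single
  split_ifs
  · simpa using Matrix.norm_single_le a b (1 : ℂ)
  · simp

lemma mk_Jmap_eq_sum {σ ψ : Fin n → Fin N} (hσψ : ∀ i j, i ≤ j → σ i ≤ ψ j)
    {A : Matrix (Fin n) (Fin n) ℂ} (hA : A ∈ upperTriangular n)
    (hJ : Jmap σ ψ A ∈ upperTriangular N) :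
    (⟨Jmap σ ψ A, hJ⟩ : upperTriangular N) = ∑ i, ∑ j, A i j • single (σ i) (ψ j) := by
  ext p q
  simp only [Jmap, Matrix.of_apply, Submodule.coe_sum, Submodule.coe_smul, Matrix.sum_apply,
    Matrix.smul_apply, smul_eq_mul]
  refine sum_congr rfl fun i _ => sum_congr rfl fun j _ => ?_
  by_cases hij : i ≤ j
  · simp [single, hσψ i j hij, hij, Matrix.single_apply, eq_comm]
  · simp [hij, hA i j (not_le.mp hij)]

noncomputable def coeff (T : upperTriangular N →L[ℂ] upperTriangular N) (x : Fin 4 → Fin N) : ℂ :=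
  (T (single (x 0) (x 1)) : Matrix (Fin N) (Fin N) ℂ) (x 2) (x 3)

variable (T : upperTriangular N →L[ℂ] upperTriangular N)

lemma norm_apply_single_le (a b : Fin N) : ‖(T (single a b) : Matrix (Fin N) (Fin N) ℂ)‖ ≤ ‖T‖ :=
  (T.le_opNorm _).trans (mul_le_of_le_one_right (norm_nonneg T) (norm_single_le a b))

lemma norm_coeff_le (x : Fin 4 → Fin N) : ‖coeff T x‖ ≤ ‖T‖ :=
  (Matrix.norm_apply_le (T (single (x 0) (x 1)) : Matrix (Fin N) (Fin N) ℂ) _ _).trans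
    (norm_apply_single_le T _ _)

lemma apply_mk_Jmap_apply {σ ψ : Fin n → Fin N} (hσψ : ∀ i j, i ≤ j → σ i ≤ ψ j)
    {A : Matrix (Fin n) (Fin n) ℂ} (hA : A ∈ upperTriangular n)
    (hJ : Jmap σ ψ A ∈ upperTriangular N) (p q : Fin N) :
    (T ⟨Jmap σ ψ A, hJ⟩ : Matrix (Fin N) (Fin N) ℂ) p q =
      ∑ i, ∑ j, A i j * coeff T ![σ i, ψ j, p, q] := by
  simp [mk_Jmap_eq_sum hσψ hA hJ, Matrix.sum_apply, coeff]

section Compression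

variable {σ ψ : Fin n → Fin N}

lemma Cmap_sub_smul_apply (hσψ : ∀ i j, i ≤ j → σ i ≤ ψ j) {A : Matrix (Fin n) (Fin n) ℂ}
    (hA : A ∈ upperTriangular n) (hJ : Jmap σ ψ A ∈ upperTriangular N) (lam : ℂ) (k l : Fin n) :
    (Cmap σ ψ (T ⟨Jmap σ ψ A, hJ⟩ : Matrix (Fin N) (Fin N) ℂ) - lam • A) k l =
      ∑ i, ∑ j, A i j * (coeff T ![σ i, ψ j, σ k, ψ l] - if i = k ∧ j = l then lam else 0) := by
  simp only [Matrix.sub_apply, Matrix.smul_apply, Cmap, Matrix.of_apply,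
    apply_mk_Jmap_apply T hσψ hA hJ, mul_sub, sum_sub_distrib]
  simp [ite_and, mul_comm]

lemma norm_Cmap_sub_smul_le (hσψ : Interlacing σ ψ) {lam : ℂ} {δ : ℝ} (hδ : 0 ≤ δ)
    (hcoeff : ∀ i j k l, i ≤ j →
      ‖coeff T ![σ i, ψ j, σ k, ψ l] - if i = k ∧ j = l then lam else 0‖ ≤ δ)
    {A : Matrix (Fin n) (Fin n) ℂ} (hA : A ∈ upperTriangular n)
    (hJ : Jmap σ ψ A ∈ upperTriangular N) :
    ‖Cmap σ ψ (T ⟨Jmap σ ψ A, hJ⟩ : Matrix (Fin N) (Fin N) ℂ) - lam • A‖ ≤ n ^ 4 * δ * ‖A‖ := by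
  have hterm : ∀ i j k l, ‖A i j * (coeff T ![σ i, ψ j, σ k, ψ l] -
      if i = k ∧ j = l then lam else 0)‖ ≤ ‖A‖ * δ := by
    intro i j k l
    rw [norm_mul]
    by_cases hij : i ≤ j
    · exact mul_le_mul (A.norm_apply_le i j) (hcoeff i j k l hij) (norm_nonneg _) (norm_nonneg _)
    · simp [hA i j (not_le.mp hij), mul_nonneg (norm_nonneg A) hδ]
  calc _ ≤ ∑ k, ∑ l, ‖(Cmap σ ψ (T ⟨Jmap σ ψ A, hJ⟩ : Matrix (Fin N) (Fin N) ℂ) - lam • A) k l‖ :=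
        Matrix.norm_le_sum_norm_apply _
    _ ≤ ∑ _k : Fin n, ∑ _l : Fin n, ∑ _i : Fin n, ∑ _j : Fin n, ‖A‖ * δ := by
        gcongr with k _ l _
        rw [Cmap_sub_smul_apply T (fun i j hij => (hσψ.lt_of_le hij).le) hA hJ]
        exact (norm_sum_le _ _).trans <| sum_le_sum fun i _ =>
          (norm_sum_le _ _).trans <| sum_le_sum fun j _ => hterm i j k l
    _ = n ^ 4 * δ * ‖A‖ := by
        simp only [sum_const, card_univ, Fintype.card_fin, nsmul_eq_mul]
        ring

end Compression

variable {K η : ℝ}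

lemma norm_coeff_le_of_dist_lt {γ : Type*} [LinearOrder γ] {m : ℕ} [NeZero m]
    {P : γ ×ₗ Fin m ↪o Fin N} (hT : ‖T‖ ≤ K) (hKm : K ^ 2 ≤ m * η ^ 2)
    (hP : ∀ x y : Fin 4 → γ ×ₗ Fin m, SameOrderType x y →
      dist (coeff T (P ∘ x)) (coeff T (P ∘ y)) < η)
    (b : Fin 4 → γ) {p : Fin 4} (hp : p = 2 ∨ p = 3) (hb : ∀ v ≠ p, b v ≠ b p) :
    ‖coeff T fun v => P (toLex (b v, 0))‖ ≤ 2 * η := by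
  let x : Fin m → Fin 4 → γ ×ₗ Fin m := fun t v => toLex (b v, (Pi.single p t : Fin 4 → Fin m) v)
  have hx : ∀ t, SameOrderType (x 0) (x t) := fun t => sameOrderType_toLex b fun u v huv => by
    suffices (Pi.single p t : Fin 4 → Fin m) u = (Pi.single p t : Fin 4 → Fin m) v by
      simp [this]
    rcases eq_or_ne u p with rfl | hu
    · obtain rfl : v = u := by_contra fun hv => hb v hv huv.symm
      rfl
    rcases eq_or_ne v p with rfl | hv
    · exact absurd huv (hb u hu)
    · simp [hu, hv]
  have hclose : ∀ s t, ‖coeff T (P ∘ x s) - coeff T (P ∘ x t)‖ ≤ η := fun s t => by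
    rw [← dist_eq_norm]
    exact (hP _ _ ((hx s).symm.trans (hx t))).le
  have hsum : ∑ t, ‖coeff T (P ∘ x t)‖ ^ 2 ≤ K ^ 2 := by
    set B := (T (single (P (toLex (b 0, 0))) (P (toLex (b 1, 0)))) : Matrix (Fin N) (Fin N) ℂ)
    have hB : ‖B‖ ^ 2 ≤ K ^ 2 :=
      pow_le_pow_left₀ (norm_nonneg _) ((norm_apply_single_le T _ _).trans hT) 2
    have hinj : Injective fun t : Fin m => P (toLex (b p, t)) := fun s t hst => by
      simpa using P.injective hst
    rcases hp with rfl | rfl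
    · exact (sum_congr rfl fun t _ => rfl).trans_le
        ((B.sum_norm_sq_apply_col_le hinj (P (toLex (b 3, 0)))).trans hB)
    · exact (sum_congr rfl fun t _ => rfl).trans_le
        ((B.sum_norm_sq_apply_row_le (P (toLex (b 2, 0))) hinj).trans hB)
  have := norm_le_two_mul_of_sum_sq_le hclose (by simpa using hsum.trans hKm) 0
  simp only [x, Pi.single_zero] at this
  exact this

theorem exists_interlacing_coeff_approx {n : ℕ} (hn : 0 < n) (K : ℝ) {η : ℝ} (hη : 0 < η) :
    ∃ N₀, ∀ N, N₀ ≤ N → ∀ T : upperTriangular N →L[ℂ] upperTriangular N, ‖T‖ ≤ K →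
      ∃ (σ ψ : Fin n → Fin N) (lam : ℂ), Interlacing σ ψ ∧ ∀ i j k l, i ≤ j →
        ‖coeff T ![σ i, ψ j, σ k, ψ l] - if i = k ∧ j = l then lam else 0‖ ≤ 2 * η := by
  have : NeZero n := ⟨hn.ne'⟩
  obtain ⟨m, hm⟩ := exists_nat_gt ((K / η) ^ 2)
  have : NeZero m := ⟨by rintro rfl; exact (sq_nonneg _).not_gt (by simpa using hm)⟩
  have hKm : K ^ 2 ≤ m * η ^ 2 := by
    rw [div_pow, div_lt_iff₀ (by positivity)] at hm
    exact hm.le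
  obtain ⟨N₀, hN₀⟩ := exists_almost_orderInvariant_embedding (isCompact_closedBall (0 : ℂ) K) hη
    (Fin (2 * n) ×ₗ Fin m) 4
  refine ⟨N₀, fun N hN T hT => ?_⟩
  obtain ⟨P, hP⟩ := hN₀ N hN (coeff T) fun x =>
    mem_closedBall_zero_iff.mpr ((norm_coeff_le T x).trans hT)
  set σ₀ : Fin n → Fin (2 * n) := fun i => ⟨2 * i, by omega⟩
  set ψ₀ : Fin n → Fin (2 * n) := fun i => ⟨2 * i + 1, by omega⟩
  have h₀ : Interlacing σ₀ ψ₀ := interlacing_two_mul n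
  set f : Fin (2 * n) → Fin (2 * n) ×ₗ Fin m := fun b => toLex (b, 0)
  have hf : StrictMono f := fun _ _ hab => Prod.Lex.toLex_lt_toLex.mpr (Or.inl hab)
  have hvec : ∀ a b c d : Fin (2 * n),
      ![P (f a), P (f b), P (f c), P (f d)] = P ∘ f ∘ ![a, b, c, d] := fun a b c d => by
    funext v; fin_cases v <;> rfl
  refine ⟨P ∘ f ∘ σ₀, P ∘ f ∘ ψ₀, coeff T ![P (f (σ₀ 0)), P (f (ψ₀ 0)), P (f (σ₀ 0)), P (f (ψ₀ 0))],
    (h₀.comp hf).comp (OrderEmbedding.strictMono P), fun i j k l hij => ?_⟩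
  simp only [comp_apply, hvec]
  split_ifs with hd
  · obtain ⟨rfl, rfl⟩ := hd
    rw [← dist_eq_norm]
    refine (hP _ _ ((sameOrderType_vec_abab (h₀.lt_of_le hij) (h₀.1 0)).comp hf hf)).le.trans ?_
    linarith
  · obtain ⟨p, hp, hb⟩ := h₀.exists_lone_index (not_and_or.mp hd)
    rw [sub_zero]
    exact norm_coeff_le_of_dist_lt T hT hKm hP _ hp hb

end upperTriangular

theorem triangular_compression_general (n : ℕ) (hn : 1 ≤ n) (ε K : ℝ) (hε : 0 < ε) :
    ∃ N₀ : ℕ, ∀ N : ℕ, N₀ < N →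
      ∀ T : upperTriangular N →L[ℂ] upperTriangular N, ‖T‖ ≤ K →
        ∃ (σ ψ : Fin n → Fin N) (lam : ℂ),
          (∀ i : Fin n, σ i < ψ i) ∧
          (∀ i j : Fin n, i < j → ψ i < σ j) ∧
          ∀ (A : Matrix (Fin n) (Fin n) ℂ), A ∈ upperTriangular n →
            ∀ hJ : Jmap σ ψ A ∈ upperTriangular N,
              ‖Cmap σ ψ ((T ⟨Jmap σ ψ A, hJ⟩ : upperTriangular N) :
                  Matrix (Fin N) (Fin N) ℂ) - lam • A‖ ≤ ε * ‖A‖ := by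
  obtain ⟨N₀, hN₀⟩ :=
    upperTriangular.exists_interlacing_coeff_approx hn K (η := ε / (2 * n ^ 4)) (by positivity)
  refine ⟨N₀, fun N hN T hT => ?_⟩
  obtain ⟨σ, ψ, lam, hσψ, hcoeff⟩ := hN₀ N hN.le T hT
  refine ⟨σ, ψ, lam, hσψ.1, hσψ.2, fun A hA hJ => ?_⟩
  calc _ ≤ n ^ 4 * (2 * (ε / (2 * n ^ 4))) * ‖A‖ :=
        upperTriangular.norm_Cmap_sub_smul_le T hσψ (by positivity) hcoeff hA hJ
    _ = ε * ‖A‖ := by field_simp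

/-- given `n ≥ 1`, `ε > 0`, `K > 0`, there is `N₀` such that every operator
`T : T_N → T_N` with `‖T‖ ≤ K` (`N > N₀`) admits interlacing indices
`σ 1 < ψ 1 < σ 2 < ψ 2 < ⋯ < σ n < ψ n` and a scalar `λ` with
`‖C (T (J A)) - λ • A‖ ≤ ε ‖A‖` for all `A ∈ T_n`. -/
theorem triangular_compression (n : ℕ) (hn : 1 ≤ n) (ε K : ℝ) (hε : 0 < ε) (hK : 0 < K) :
    ∃ N₀ : ℕ, ∀ N : ℕ, N₀ < N →
      ∀ T : upperTriangular N →L[ℂ] upperTriangular N, ‖T‖ ≤ K →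
        ∃ (σ ψ : Fin n → Fin N) (lam : ℂ),
          (∀ i : Fin n, σ i < ψ i) ∧
          (∀ i j : Fin n, i < j → ψ i < σ j) ∧
          ∀ (A : Matrix (Fin n) (Fin n) ℂ), A ∈ upperTriangular n →
            ∀ hJ : Jmap σ ψ A ∈ upperTriangular N,
              ‖Cmap σ ψ ((T ⟨Jmap σ ψ A, hJ⟩ : upperTriangular N) :
                  Matrix (Fin N) (Fin N) ℂ) - lam • A‖ ≤ ε * ‖A‖ :=
  triangular_compression_general n hn ε K hε
end

section
/- For all n, m ∈ ℕ and every ε > 0 there exists N₀ ∈ ℕ with the following property: for every N > N₀ and every n-dimensional linear subspace E of T_N, there exist indices σ(1) < ψ(1) < σ(2) < ψ(2) < ⋯ < σ(m) < ψ(m) in {1, …, N} such that the block projection q : T_N → T_N, defined by (q(B))(i,j) = B(i,j) if i ∈ {σ(1),…,σ(m)} and j ∈ {ψ(1),…,ψ(m)}, and (q(B))(i,j) = 0 otherwise, satisfies ‖q(x)‖ ≤ ε ‖x‖ for every x ∈ E. -/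
/-!
Fix an orthonormal basis of `E` for the Hilbert–Schmidt inner product. Each basis vector has at
most `N / s²` entries of modulus above `s / √N`, so outside a set `S` of `O(N)` positions every
entry of every `x ∈ E` is at most `n s ‖x‖`, the Hilbert–Schmidt norm being at most `√N ‖x‖`.
Viewed as the edges of a graph on `{1, …, N}`, `S` leaves for large `N` an independent set of
`2m` vertices; listing it in increasing order as `σ 1 < ψ 1 < ⋯ < σ m < ψ m` gives a block
whose `m²` entries all avoid `S`, and the operator norm of the block is at most the sum of the
moduli of its entries.
-/

open scoped Matrix.Norms.L2Operator

/-- The block projection with row set `{σ 1, …, σ m}` and column set `{ψ 1, …, ψ m}`: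
keeps entries whose row index is some `σ k` and column index is some `ψ l`,
all other entries become `0`. -/
noncomputable def blockProjection {m N : ℕ} (σ ψ : Fin m → Fin N)
    (B : Matrix (Fin N) (Fin N) ℂ) : Matrix (Fin N) (Fin N) ℂ :=
  Matrix.of fun i j => if (∃ k : Fin m, i = σ k) ∧ (∃ l : Fin m, j = ψ l) then B i j else 0

open Finset

namespace EuclideanSpace

variable {𝕜 ι : Type*} [RCLike 𝕜] [Fintype ι]

lemma norm_le_sum_norm_apply (y : EuclideanSpace 𝕜 ι) : ‖y‖ ≤ ∑ i, ‖y i‖ := by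
  rw [EuclideanSpace.norm_eq]
  calc √(∑ i, ‖y i‖ ^ 2) ≤ √((∑ i, ‖y i‖) ^ 2) :=
        Real.sqrt_le_sqrt (sum_sq_le_sq_sum_of_nonneg fun i _ => norm_nonneg _)
    _ = ∑ i, ‖y i‖ := Real.sqrt_sq (by positivity)

lemma card_filter_lt_norm_apply_mul_sq_le (v : EuclideanSpace 𝕜 ι) {t : ℝ} (ht : 0 ≤ t) :
    #{p | t < ‖v p‖} * t ^ 2 ≤ ‖v‖ ^ 2 := by
  classical
  rw [EuclideanSpace.norm_sq_eq]
  calc (#{p | t < ‖v p‖} : ℝ) * t ^ 2 = ∑ _p ∈ {p | t < ‖v p‖}, t ^ 2 := by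
        rw [sum_const, nsmul_eq_mul]
    _ ≤ ∑ p ∈ {p | t < ‖v p‖}, ‖v p‖ ^ 2 :=
        sum_le_sum fun p hp => pow_le_pow_left₀ ht (mem_filter.1 hp).2.le 2
    _ ≤ ∑ p, ‖v p‖ ^ 2 := sum_le_sum_of_subset_of_nonneg (subset_univ _) fun _ _ _ => by positivity

end EuclideanSpace

/-- Expanding `y` in an orthonormal basis `b` of `F`, the coordinate `y p` is small unless `p`
is a large coordinate of some `b i`; each `b i` is a unit vector, so it has at most `1 / t ^ 2`
coordinates larger than `t`. -/
lemma Submodule.exists_finset_forall_norm_apply_le {𝕜 ι : Type*} [RCLike 𝕜] [Fintype ι]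
    (F : Submodule 𝕜 (EuclideanSpace 𝕜 ι)) {t : ℝ} (ht : 0 ≤ t) :
    ∃ S : Finset ι, #S * t ^ 2 ≤ Module.finrank 𝕜 F ∧
      ∀ y ∈ F, ∀ p ∉ S, ‖y p‖ ≤ Module.finrank 𝕜 F * t * ‖y‖ := by
  classical
  let b := stdOrthonormalBasis 𝕜 F
  have hunit : ∀ i, ‖(b i : EuclideanSpace 𝕜 ι)‖ = 1 := b.orthonormal.1
  refine ⟨univ.biUnion fun i => {p | t < ‖(b i : EuclideanSpace 𝕜 ι) p‖}, ?_, ?_⟩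
  · calc (#(univ.biUnion fun i => {p | t < ‖(b i : EuclideanSpace 𝕜 ι) p‖}) : ℝ) * t ^ 2
        ≤ (∑ i, (#{p | t < ‖(b i : EuclideanSpace 𝕜 ι) p‖} : ℝ)) * t ^ 2 := by
          gcongr; exact_mod_cast card_biUnion_le
      _ = ∑ i, (#{p | t < ‖(b i : EuclideanSpace 𝕜 ι) p‖} : ℝ) * t ^ 2 := sum_mul _ _ _
      _ ≤ ∑ i, ‖(b i : EuclideanSpace 𝕜 ι)‖ ^ 2 := sum_le_sum fun i _ =>
          EuclideanSpace.card_filter_lt_norm_apply_mul_sq_le _ ht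
      _ = Module.finrank 𝕜 F := by simp [hunit]
  · intro y hy p hp
    have hsmall : ∀ i, ‖(b i : EuclideanSpace 𝕜 ι) p‖ ≤ t := by
      simpa only [mem_biUnion, mem_filter, mem_univ, true_and, not_exists, not_lt] using hp
    have hexpand : y p = ∑ i, b.repr ⟨y, hy⟩ i * (b i : EuclideanSpace 𝕜 ι) p := by
      conv_lhs => rw [show y = (⟨y, hy⟩ : F) from rfl, ← b.sum_repr ⟨y, hy⟩]
      simp
    calc ‖y p‖ ≤ ∑ i, ‖b.repr ⟨y, hy⟩ i‖ * ‖(b i : EuclideanSpace 𝕜 ι) p‖ := by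
          rw [hexpand]; exact (norm_sum_le _ _).trans_eq (by simp only [norm_mul])
      _ ≤ ∑ _i, ‖y‖ * t := sum_le_sum fun i _ => by
          gcongr
          · exact (PiLp.norm_apply_le _ i).trans_eq (b.repr.norm_map _)
          · exact hsmall i
      _ = Module.finrank 𝕜 F * t * ‖y‖ := by
          simp only [sum_const, card_univ, Fintype.card_fin, nsmul_eq_mul]; ring

namespace Matrix

variable {𝕜 m n : Type*} [RCLike 𝕜]

variable (𝕜 m n) in
noncomputable def toEuclideanEntries : Matrix m n 𝕜 ≃ₗ[𝕜] EuclideanSpace 𝕜 (m × n) :=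
  (LinearEquiv.curry 𝕜 𝕜 m n).symm.trans (WithLp.linearEquiv 2 𝕜 _).symm

@[simp]
lemma toEuclideanEntries_apply (A : Matrix m n 𝕜) (p : m × n) :
    toEuclideanEntries 𝕜 m n A p = A p.1 p.2 := rfl

variable [Fintype m] [Fintype n] [DecidableEq n]

lemma l2_opNorm_le_sum_norm_apply (A : Matrix m n 𝕜) : ‖A‖ ≤ ∑ i, ∑ j, ‖A i j‖ := by
  rw [l2_opNorm_def]
  refine ContinuousLinearMap.opNorm_le_bound _ (by positivity) fun v => ?_
  calc ‖toEuclideanLin A v‖ ≤ ∑ i, ‖(toEuclideanLin A v) i‖ :=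
        EuclideanSpace.norm_le_sum_norm_apply _
    _ ≤ ∑ i, ∑ j, ‖A i j‖ * ‖v‖ := sum_le_sum fun i _ => by
        refine (norm_sum_le _ _).trans (sum_le_sum fun j _ => ?_)
        rw [norm_mul]
        exact mul_le_mul_of_nonneg_left (PiLp.norm_apply_le v j) (norm_nonneg _)
    _ = (∑ i, ∑ j, ‖A i j‖) * ‖v‖ := by simp only [sum_mul]

lemma sum_norm_sq_apply_le_l2_opNorm_sq (A : Matrix m n 𝕜) (j : n) :
    ∑ i, ‖A i j‖ ^ 2 ≤ ‖A‖ ^ 2 := by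
  have h := A.l2_opNorm_mulVec (EuclideanSpace.single j 1)
  rw [PiLp.norm_single, norm_one, mul_one] at h
  have hcol : ‖(EuclideanSpace.equiv m 𝕜).symm (A *ᵥ EuclideanSpace.single j 1)‖ ^ 2
      = ∑ i, ‖A i j‖ ^ 2 := by
    simp [EuclideanSpace.norm_sq_eq]
  rw [← hcol]
  exact pow_le_pow_left₀ (norm_nonneg _) h 2

lemma norm_toEuclideanEntries_le (A : Matrix m n 𝕜) :
    ‖toEuclideanEntries 𝕜 m n A‖ ≤ √(Fintype.card n) * ‖A‖ := by
  rw [← Real.sqrt_sq (norm_nonneg A), ← Real.sqrt_mul (Nat.cast_nonneg _),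
    EuclideanSpace.norm_eq]
  refine Real.sqrt_le_sqrt ?_
  calc ∑ p, ‖toEuclideanEntries 𝕜 m n A p‖ ^ 2 = ∑ j, ∑ i, ‖A i j‖ ^ 2 := by
        simp only [toEuclideanEntries_apply]
        rw [Fintype.sum_prod_type, sum_comm]
    _ ≤ ∑ _j : n, ‖A‖ ^ 2 := sum_le_sum fun j _ => A.sum_norm_sq_apply_le_l2_opNorm_sq j
    _ = Fintype.card n * ‖A‖ ^ 2 := by simp

/-- The Euclidean norm of the entries is at most `√(card n)` times the operator norm, so the
Euclidean version with `t = s / √(card n)` applies to the entries of `E`. -/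
lemma exists_finset_forall_norm_apply_le [Nonempty n] (E : Submodule 𝕜 (Matrix m n 𝕜)) {s : ℝ}
    (hs : 0 ≤ s) : ∃ S : Finset (m × n), #S * s ^ 2 ≤ Module.finrank 𝕜 E * Fintype.card n ∧
      ∀ A ∈ E, ∀ p ∉ S, ‖A p.1 p.2‖ ≤ Module.finrank 𝕜 E * s * ‖A‖ := by
  set e := toEuclideanEntries 𝕜 m n
  have hc : 0 < √(Fintype.card n) := Real.sqrt_pos.2 (by exact_mod_cast Fintype.card_pos)
  obtain ⟨S, hS, hsmall⟩ :=
    (E.map e.toLinearMap).exists_finset_forall_norm_apply_le (t := s / √(Fintype.card n))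
      (by positivity)
  rw [LinearEquiv.finrank_map_eq] at hS hsmall
  refine ⟨S, ?_, fun A hA p hp => ?_⟩
  · rw [div_pow, Real.sq_sqrt (Nat.cast_nonneg _), mul_div_assoc', div_le_iff₀ (by positivity)]
      at hS
    exact hS
  · calc ‖A p.1 p.2‖ ≤ Module.finrank 𝕜 E * (s / √(Fintype.card n)) * ‖e A‖ :=
          hsmall (e A) (Submodule.mem_map_of_mem hA) p hp
      _ ≤ Module.finrank 𝕜 E * (s / √(Fintype.card n)) * (√(Fintype.card n) * ‖A‖) := by
          gcongr; exact norm_toEuclideanEntries_le A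
      _ = Module.finrank 𝕜 E * s * ‖A‖ := by field_simp

end Matrix

namespace SimpleGraph

variable {V : Type*} [Fintype V] [DecidableEq V] (G : SimpleGraph V) [DecidableRel G.Adj]

lemma exists_isNIndepSet_of_forall_degree_le {K : ℕ} (j : ℕ) {S : Finset V}
    (hdeg : ∀ v ∈ S, G.degree v ≤ K) (hS : j * (K + 1) ≤ #S) :
    ∃ T ⊆ S, G.IsNIndepSet j T := by
  induction j generalizing S with
  | zero => exact ⟨∅, empty_subset _, by simp [isNIndepSet_iff]⟩
  | succ j ih =>
    obtain ⟨v, hv⟩ : S.Nonempty := card_pos.1 (by nlinarith)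
    set S' := S \ insert v (G.neighborFinset v)
    have hS' : j * (K + 1) ≤ #S' := by
      have hsdiff : #S - #(insert v (G.neighborFinset v)) ≤ #S' := le_card_sdiff _ _
      have hins : #(insert v (G.neighborFinset v)) ≤ K + 1 :=
        (card_insert_le _ _).trans (Nat.succ_le_succ (hdeg v hv))
      have : (j + 1) * (K + 1) = j * (K + 1) + (K + 1) := by ring
      omega
    obtain ⟨T, hTS', hT⟩ := ih (fun w hw => hdeg w (mem_sdiff.1 hw).1) hS'
    refine ⟨insert v T, insert_subset hv (hTS'.trans sdiff_subset), ?_⟩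
    rw [← isNClique_compl] at hT ⊢
    refine hT.insert fun w hw => ?_
    have hw' := (mem_sdiff.1 (hTS' hw)).2
    rw [mem_insert, mem_neighborFinset, not_or] at hw'
    exact (compl_adj G v w).2 ⟨Ne.symm hw'.1, hw'.2⟩

/-- At most half of the vertices have degree above `4 * C`, and greedy selection among the
others gives the independent set. -/
lemma exists_isNIndepSet_of_card_edgeFinset_le {C : ℕ} (j : ℕ)
    (hE : #G.edgeFinset ≤ C * Fintype.card V) (hV : 2 * j * (4 * C + 1) ≤ Fintype.card V) :
    ∃ T, G.IsNIndepSet j T := by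
  set S : Finset V := {v | G.degree v ≤ 4 * C}
  have hhigh : #Sᶜ * (4 * C + 1) ≤ 2 * C * Fintype.card V := by
    calc #Sᶜ * (4 * C + 1) ≤ ∑ v ∈ Sᶜ, G.degree v := by
          rw [← smul_eq_mul]
          exact card_nsmul_le_sum _ _ _ fun v hv => by simpa [S] using hv
      _ ≤ ∑ v, G.degree v := sum_le_sum_of_subset (subset_univ _)
      _ = 2 * #G.edgeFinset := G.sum_degrees_eq_twice_card_edges
      _ ≤ 2 * C * Fintype.card V := by rw [mul_assoc]; gcongr
  have hlow : j * (4 * C + 1) ≤ #S := by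
    have hsum := card_add_card_compl S
    have : 2 * #Sᶜ ≤ Fintype.card V :=
      Nat.le_of_mul_le_mul_right (c := 4 * C + 1) (by nlinarith) (by omega)
    nlinarith
  obtain ⟨T, -, hT⟩ := G.exists_isNIndepSet_of_forall_degree_le j
    (fun v hv => (mem_filter.1 hv).2) hlow
  exact ⟨T, hT⟩

omit [DecidableRel G.Adj] in
lemma card_edgeFinset_fromRel_le (B : Finset (V × V))
    [DecidableRel (fromRel fun a b => (a, b) ∈ B).Adj] :
    #(fromRel fun a b => (a, b) ∈ B).edgeFinset ≤ #B := by
  have hsub : (fromRel fun a b => (a, b) ∈ B).edgeFinset ⊆ B.image fun p => s(p.1, p.2) := by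
    intro e he
    induction e using Sym2.ind with
    | h a b =>
      rw [mem_edgeFinset, mem_edgeSet, fromRel_adj] at he
      rcases he.2 with h | h
      · exact mem_image_of_mem _ h
      · exact mem_image.2 ⟨(b, a), h, Sym2.eq_swap⟩
  exact (card_le_card hsub).trans card_image_le

end SimpleGraph

lemma Finset.exists_interlacing {α : Type*} [LinearOrder α] {T : Finset α} {m : ℕ}
    (hT : #T = 2 * m) : ∃ σ ψ : Fin m → α, (∀ i, σ i < ψ i) ∧ (∀ i j, i < j → ψ i < σ j) ∧
      (∀ i, σ i ∈ T ∧ ψ i ∈ T) ∧ ∀ i j, σ i ≠ ψ j := by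
  let g := T.orderEmbOfFin hT
  refine ⟨fun i => g ⟨2 * i, by omega⟩, fun i => g ⟨2 * i + 1, by omega⟩,
    fun i => g.strictMono (by simp [Fin.lt_def]), fun i j hij => g.strictMono ?_,
    fun i => ⟨T.orderEmbOfFin_mem hT _, T.orderEmbOfFin_mem hT _⟩, fun i j h => ?_⟩
  · rw [Fin.lt_def] at hij ⊢; simp only; omega
  · have := Fin.val_eq_of_eq (g.injective h); simp only at this; omega

lemma exists_interlacing_forall_notMem {α : Type*} [Fintype α] [LinearOrder α] {C m : ℕ}
    (S : Finset (α × α)) (hS : #S ≤ C * Fintype.card α)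
    (hα : 2 * (2 * m) * (4 * C + 1) ≤ Fintype.card α) :
    ∃ σ ψ : Fin m → α, (∀ i, σ i < ψ i) ∧ (∀ i j, i < j → ψ i < σ j) ∧ ∀ k l, (σ k, ψ l) ∉ S := by
  classical
  let G := SimpleGraph.fromRel fun a b => (a, b) ∈ S
  obtain ⟨T, hT⟩ := G.exists_isNIndepSet_of_card_edgeFinset_le (2 * m)
    ((SimpleGraph.card_edgeFinset_fromRel_le S).trans hS) hα
  obtain ⟨σ, ψ, hσψ, hψσ, hmem, hne⟩ := Finset.exists_interlacing hT.card_eq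
  exact ⟨σ, ψ, hσψ, hψσ, fun k l h =>
    hT.isIndepSet (hmem k).1 (hmem l).2 (hne k l) (by simp [G, hne k l, h])⟩

lemma norm_blockProjection_le {m N : ℕ} (σ ψ : Fin m → Fin N) (B : Matrix (Fin N) (Fin N) ℂ) :
    ‖blockProjection σ ψ B‖ ≤ ∑ k, ∑ l, ‖B (σ k) (ψ l)‖ := by
  classical
  have hrange : ∀ f : Fin m → Fin N, ({i | ∃ k, i = f k} : Finset _) = univ.image f := fun f => by
    ext; simp [eq_comm]
  have hentries : ∑ i, ∑ j, ‖blockProjection σ ψ B i j‖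
      = ∑ i ∈ univ.image σ, ∑ j ∈ univ.image ψ, ‖B i j‖ := by
    rw [← hrange σ, ← hrange ψ, sum_filter]
    refine sum_congr rfl fun i _ => ?_
    rw [sum_filter]
    split_ifs with hi <;> simp [blockProjection, hi, apply_ite norm]
  calc ‖blockProjection σ ψ B‖ ≤ ∑ i, ∑ j, ‖blockProjection σ ψ B i j‖ :=
        Matrix.l2_opNorm_le_sum_norm_apply _
    _ = ∑ i ∈ univ.image σ, ∑ j ∈ univ.image ψ, ‖B i j‖ := hentries
    _ ≤ ∑ k, ∑ j ∈ univ.image ψ, ‖B (σ k) j‖ :=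
        sum_image_le_of_nonneg fun _ _ => sum_nonneg fun _ _ => norm_nonneg _
    _ ≤ ∑ k, ∑ l, ‖B (σ k) (ψ l)‖ :=
        sum_le_sum fun _ _ => sum_image_le_of_nonneg fun _ _ => norm_nonneg _

/-- for all `n`, `m` and `ε > 0` there is `N₀` such that for every `N > N₀`
and every `n`-dimensional subspace `E` of `T_N` there are interlacing indices
`σ 1 < ψ 1 < σ 2 < ψ 2 < ⋯ < σ m < ψ m` whose block projection `q` satisfies
`‖q x‖ ≤ ε ‖x‖` on `E`. -/
theorem block_projection_small_on_subspace (n m : ℕ) (ε : ℝ) (hε : 0 < ε) :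
    ∃ N₀ : ℕ, ∀ N : ℕ, N₀ < N →
      ∀ E : Submodule ℂ (upperTriangular N), Module.finrank ℂ E = n →
        ∃ σ ψ : Fin m → Fin N,
          (∀ i : Fin m, σ i < ψ i) ∧
          (∀ i j : Fin m, i < j → ψ i < σ j) ∧
          ∀ x : upperTriangular N, x ∈ E →
            ‖blockProjection σ ψ (x : Matrix (Fin N) (Fin N) ℂ)‖ ≤ ε * ‖x‖ := by
  set s : ℝ := ε / (m ^ 2 * n + 1)
  set C : ℕ := ⌈n / s ^ 2⌉₊
  refine ⟨2 * (2 * m) * (4 * C + 1), fun N hN E hE => ?_⟩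
  have : NeZero N := ⟨by omega⟩
  obtain ⟨S, hS, hsmall⟩ :=
    Matrix.exists_finset_forall_norm_apply_le (E.map (upperTriangular N).subtype) (s := s)
      (by positivity)
  rw [Submodule.finrank_map_subtype_eq, hE, Fintype.card_fin] at hS
  rw [Submodule.finrank_map_subtype_eq, hE] at hsmall
  have hSN : #S ≤ C * N := by
    have : (#S : ℝ) ≤ n / s ^ 2 * N := by
      rw [div_mul_eq_mul_div, le_div_iff₀ (by positivity)]
      linarith
    exact_mod_cast this.trans (mul_le_mul_of_nonneg_right (Nat.le_ceil _) (Nat.cast_nonneg _))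
  obtain ⟨σ, ψ, hσψ, hψσ, hσψS⟩ :=
    exists_interlacing_forall_notMem S (by simpa using hSN) (by simpa using hN.le)
  refine ⟨σ, ψ, hσψ, hψσ, fun x hx => ?_⟩
  calc ‖blockProjection σ ψ (x : Matrix (Fin N) (Fin N) ℂ)‖
      ≤ ∑ k, ∑ l, ‖(x : Matrix (Fin N) (Fin N) ℂ) (σ k) (ψ l)‖ := norm_blockProjection_le _ _ _
    _ ≤ ∑ _k : Fin m, ∑ _l : Fin m, n * s * ‖x‖ := by
        gcongr with k _ l
        exact hsmall x (Submodule.mem_map_of_mem hx) (σ k, ψ l) (hσψS k l)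
    _ = m ^ 2 * n / (m ^ 2 * n + 1) * ε * ‖x‖ := by
        simp only [Submodule.coe_norm, sum_const, card_univ, Fintype.card_fin, nsmul_eq_mul, s]
        ring
    _ ≤ ε * ‖x‖ := by
      gcongr
      exact mul_le_of_le_one_left hε.le ((div_le_one (by positivity)).2 (by linarith))
end

section
/- For every m ∈ ℕ and every δ > 0 there exists N₀ ∈ ℕ with the following property: for every N > N₀ and every upper triangular N×N complex matrix x whose operator norm on ℂ^N is at most 1, there exists a subset ρ of {1, …, N} of cardinality m such that |x(i,j)| < δ for all i, j ∈ ρ with i < j. -/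
/-!
Every row of a matrix of operator norm at most `1` has `ℓ²` norm at most `1`, so at most
`⌊δ⁻²⌋` of its entries have modulus `≥ δ`. Choosing greedily the least remaining index and
discarding the indices `j` with a large entry in its row loses at most `⌊δ⁻²⌋ + 1` indices
per chosen one, so `N ≥ (⌊δ⁻²⌋ + 1) m` suffices.
-/

open Finset
open scoped Matrix.Norms.L2Operator

namespace Matrix

variable {𝕜 m n : Type*} [RCLike 𝕜] [Fintype m] [Fintype n]

theorem sum_sq_norm_col_le_sq_l2_opNorm [DecidableEq n] (A : Matrix m n 𝕜) (j : n) :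
    ∑ i, ‖A i j‖ ^ 2 ≤ ‖A‖ ^ 2 := by
  have h := A.l2_opNorm_mulVec (EuclideanSpace.single j 1)
  rw [PiLp.norm_single, norm_one, mul_one] at h
  calc ∑ i, ‖A i j‖ ^ 2
      = ‖(EuclideanSpace.equiv m 𝕜).symm (A *ᵥ EuclideanSpace.single j 1)‖ ^ 2 := by
        rw [EuclideanSpace.norm_sq_eq]
        simp
    _ ≤ ‖A‖ ^ 2 := by gcongr

theorem sum_sq_norm_row_le_sq_l2_opNorm [DecidableEq m] [DecidableEq n] (A : Matrix m n 𝕜)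
    (i : m) : ∑ j, ‖A i j‖ ^ 2 ≤ ‖A‖ ^ 2 := by
  simpa [l2_opNorm_conjTranspose] using Aᴴ.sum_sq_norm_col_le_sq_l2_opNorm i

theorem card_le_norm_entry_le_floor [DecidableEq m] [DecidableEq n] (A : Matrix m n 𝕜) (i : m)
    {δ : ℝ} (hδ : 0 < δ) : #{j | δ ≤ ‖A i j‖} ≤ ⌊(‖A‖ / δ) ^ 2⌋₊ := by
  refine Nat.le_floor ?_
  rw [div_pow, le_div_iff₀ (by positivity)]
  calc #{j | δ ≤ ‖A i j‖} * δ ^ 2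
      ≤ ∑ j ∈ {j | δ ≤ ‖A i j‖}, ‖A i j‖ ^ 2 := by
        rw [← nsmul_eq_mul]
        exact card_nsmul_le_sum _ _ _ fun j hj => by gcongr; exact (mem_filter.1 hj).2
    _ ≤ ∑ j, ‖A i j‖ ^ 2 := sum_le_univ_sum_of_nonneg fun _ => by positivity
    _ ≤ ‖A‖ ^ 2 := A.sum_sq_norm_row_le_sq_l2_opNorm i

end Matrix

theorem Finset.exists_subset_card_eq_forall_lt_rel {α : Type*} [LinearOrder α]
    (r : α → α → Prop) [DecidableRel r] {K : ℕ} (m : ℕ) (S : Finset α)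
    (hr : ∀ i ∈ S, #{j ∈ S | ¬r i j} ≤ K) (hS : (K + 1) * m ≤ #S) :
    ∃ ρ ⊆ S, #ρ = m ∧ ∀ i ∈ ρ, ∀ j ∈ ρ, i < j → r i j := by
  induction m generalizing S with
  | zero => exact ⟨∅, empty_subset S, rfl, by simp⟩
  | succ m ih =>
    have hS_ne : S.Nonempty := card_pos.1 (by nlinarith)
    set i₀ := S.min' hS_ne
    have hi₀ : i₀ ∈ S := S.min'_mem hS_ne
    set S' := {j ∈ S.erase i₀ | r i₀ j}
    have hS'S : S' ⊆ S := (filter_subset _ _).trans (erase_subset _ _)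
    have hr' : ∀ i ∈ S', #{j ∈ S' | ¬r i j} ≤ K := fun i hi =>
      (card_le_card (filter_subset_filter _ hS'S)).trans (hr i (hS'S hi))
    have hS' : (K + 1) * m ≤ #S' := by
      have h_erase : #(S.erase i₀) + 1 = #S := card_erase_add_one hi₀
      have h_split := card_filter_add_card_filter_not (s := S.erase i₀) (r i₀)
      have h_lost : #{j ∈ S.erase i₀ | ¬r i₀ j} ≤ K :=
        (card_le_card (filter_subset_filter _ (erase_subset _ _))).trans (hr i₀ hi₀)
      nlinarith
    obtain ⟨ρ, hρS', hρ, hρr⟩ := ih S' hr' hS'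
    have hρS : ρ ⊆ S.erase i₀ := hρS'.trans (filter_subset _ _)
    refine ⟨insert i₀ ρ, insert_subset hi₀ (hρS'.trans hS'S), ?_, ?_⟩
    · rw [card_insert_of_notMem fun h => notMem_erase i₀ S (hρS h), hρ]
    · intro i hi j hj hij
      rcases mem_insert.1 hi with rfl | hi <;> rcases mem_insert.1 hj with rfl | hj
      · exact absurd hij (lt_irrefl _)
      · exact (mem_filter.1 (hρS' hj)).2
      · exact absurd (S.min'_le i (mem_of_mem_erase (hρS hi))) hij.not_ge
      · exact hρr i hi j hj hij

/-- For every `m` and `δ > 0` there is `N₀` such that any upper triangular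
`N × N` complex matrix (`N > N₀`) of operator norm at most `1` admits a subset
`ρ ⊆ {1, …, N}` of cardinality `m` with `|x i j| < δ` for all `i < j` in `ρ`. -/
theorem upper_triangular_small_entries (m : ℕ) (δ : ℝ) (hδ : 0 < δ) :
    ∃ N₀ : ℕ, ∀ N : ℕ, N₀ < N →
      ∀ x : Matrix (Fin N) (Fin N) ℂ,
        (∀ i j : Fin N, j < i → x i j = 0) →
        ‖x‖ ≤ 1 →
        ∃ ρ : Finset (Fin N), ρ.card = m ∧
          ∀ i ∈ ρ, ∀ j ∈ ρ, i < j → ‖x i j‖ < δ := by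
  set K := ⌊(1 / δ) ^ 2⌋₊
  refine ⟨(K + 1) * m, fun N hN x _ hx => ?_⟩
  have h_few_large (i : Fin N) : #{j | ¬‖x i j‖ < δ} ≤ K := by
    simp only [not_lt]
    exact (x.card_le_norm_entry_le_floor i hδ).trans (Nat.floor_le_floor (by gcongr))
  obtain ⟨ρ, -, hρ⟩ := exists_subset_card_eq_forall_lt_rel (fun i j => ‖x i j‖ < δ) m univ
    (fun i _ => h_few_large i) (by simpa using hN.le)
  exact ⟨ρ, hρ⟩
end

section
/- Let X be a complex Banach space, let p be an extended real number with 1 ≤ p ≤ ∞, and suppose X is isomorphic (via a continuous linear equivalence) to the ℓ_p-sum (∑⊕X)_p of countably many copies of X. If for every bounded linear operator T : X → X the identity of X factors through T or through I − T (i.e., there exist bounded linear operators A, B : X → X with A T B = I or A(I − T)B = I), then X is primary: for all complex Banach spaces Y and Z, if X is isomorphic to Y ⊕ Z then X is isomorphic to Y or X is isomorphic to Z. -/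
/-!
Project onto the two summands: with `P` the projection of `X ≅ Y ⊕ Z` onto `Y`, the hypothesis
makes the identity of `X` factor through `P` or through `I - P`, i.e. through `Y` or through `Z`,
so `X` is isomorphic to a complemented subspace of `Y` or of `Z`. Pełczyński's decomposition
method then concludes: if `X ≅ Y ⊕ V`, `Y ≅ X ⊕ W` and `X ≅ ℓ_p(X)`, then
`X ≅ ℓ_p(Y) ⊕ ℓ_p(V) ≅ Y ⊕ ℓ_p(Y) ⊕ ℓ_p(V) ≅ Y ⊕ X` and `Y ≅ X ⊕ X ⊕ W ≅ X ⊕ Y`, hence `X ≅ Y`.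
-/

open ContinuousLinearMap
open scoped ENNReal

variable {𝕜 : Type*} [NontriviallyNormedField 𝕜] {p : ℝ≥0∞}

theorem memℓp_nat_add_one_iff {E : Type*} [NormedAddCommGroup E] {f : ℕ → E} :
    Memℓp (fun n => f (n + 1)) p ↔ Memℓp f p := by
  obtain rfl | rfl | hp := p.trichotomy
  · simp only [memℓp_zero_iff]
    refine ⟨fun h => ((h.image (· + 1)).insert 0).subset ?_,
      fun h => h.preimage (add_left_injective 1).injOn⟩
    rintro (_ | n) hn
    · exact Set.mem_insert 0 _
    · exact Set.mem_insert_of_mem 0 ⟨n, hn, rfl⟩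
  · simp only [memℓp_infty_iff]
    refine ⟨fun h => (h.insert ‖f 0‖).mono ?_,
      fun h => h.mono (Set.range_comp_subset_range (· + 1) fun n => ‖f n‖)⟩
    rintro _ ⟨_ | n, rfl⟩
    · exact Set.mem_insert _ _
    · exact Set.mem_insert_of_mem _ ⟨n, rfl⟩
  · simp only [memℓp_gen_iff hp]
    exact summable_nat_add_iff (f := fun n => ‖f n‖ ^ p.toReal) 1

namespace lp

variable [Fact (1 ≤ p)] {ι : Type*}

section Pi

variable {G : Type*} [NormedAddCommGroup G] [NormedSpace 𝕜 G] [CompleteSpace G]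
  {E : ι → Type*} [∀ i, NormedAddCommGroup (E i)] [∀ i, NormedSpace 𝕜 (E i)]
  [∀ i, CompleteSpace (E i)]

/-- Closed graph theorem: the graph is cut out by closed conditions on the coordinates. -/
theorem continuous_of_continuous_apply (φ : G →ₗ[𝕜] lp E p)
    (h : ∀ i, Continuous fun g => φ g i) : Continuous φ := by
  refine φ.continuous_of_isClosed_graph ?_
  have hgraph : (φ.graph : Set (G × lp E p)) = ⋂ i, {x | x.2 i = φ x.1 i} := by
    ext x
    simp only [SetLike.mem_coe, LinearMap.mem_graph_iff, Set.mem_iInter, Set.mem_ofPred_eq]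
    exact ⟨fun hx i => by rw [hx], fun hx => lp.ext (funext hx)⟩
  rw [hgraph]
  exact isClosed_iInter fun i =>
    isClosed_eq ((evalCLM 𝕜 E p i).continuous.comp continuous_snd) ((h i).comp continuous_fst)

noncomputable def piCLM (φ : ∀ i, G →L[𝕜] E i) (hφ : ∀ g, Memℓp (fun i => φ i g) p) :
    G →L[𝕜] lp E p :=
  let φ' : G →ₗ[𝕜] lp E p :=
    { toFun g := ⟨fun i => φ i g, hφ g⟩
      map_add' g h := lp.ext <| funext fun i => map_add (φ i) g h
      map_smul' c g := lp.ext <| funext fun i => map_smul (φ i) c g }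
  ⟨φ', continuous_of_continuous_apply φ' fun i => (φ i).continuous⟩

end Pi

variable {E F : Type*} [NormedAddCommGroup E] [NormedSpace 𝕜 E] [NormedAddCommGroup F]
  [NormedSpace 𝕜 F]

noncomputable def congrCLE (e : E ≃L[𝕜] F) :
    lp (fun _ : ι => E) p ≃L[𝕜] lp (fun _ : ι => F) p :=
  .equivOfInverse (mapCLM p (fun _ => (e : E →L[𝕜] F)) (norm_nonneg _) fun _ => le_rfl)
    (mapCLM p (fun _ => (e.symm : F →L[𝕜] E)) (norm_nonneg _) fun _ => le_rfl)
    (fun f => lp.ext <| funext fun i => e.symm_apply_apply (f i))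
    (fun f => lp.ext <| funext fun i => e.apply_symm_apply (f i))

variable [CompleteSpace E] [CompleteSpace F]

noncomputable def prodCLE :
    lp (fun _ : ι => E × F) p ≃L[𝕜] lp (fun _ : ι => E) p × lp (fun _ : ι => F) p :=
  .equivOfInverse ((mapCLM p (fun _ => fst 𝕜 E F) (norm_nonneg _) fun _ => le_rfl).prod
      (mapCLM p (fun _ => snd 𝕜 E F) (norm_nonneg _) fun _ => le_rfl))
    (piCLM (fun i => (evalCLM 𝕜 _ p i ∘L fst 𝕜 _ _).prod (evalCLM 𝕜 _ p i ∘L snd 𝕜 _ _))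
      fun fg => ((lp.memℓp fg.1).norm.add (lp.memℓp fg.2).norm).mono fun _ =>
        max_le_add_of_nonneg (norm_nonneg _) (norm_nonneg _))
    (fun _ => rfl) (fun _ => rfl)

noncomputable def headTailCLE : lp (fun _ : ℕ => E) p ≃L[𝕜] E × lp (fun _ : ℕ => E) p :=
  .equivOfInverse
    ((evalCLM 𝕜 _ p 0).prod
      (piCLM (fun n => evalCLM 𝕜 _ p (n + 1)) fun f => memℓp_nat_add_one_iff.mpr (lp.memℓp f)))
    (piCLM (fun | 0 => fst 𝕜 _ _ | n + 1 => evalCLM 𝕜 _ p n ∘L snd 𝕜 _ _)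
      fun xf => memℓp_nat_add_one_iff.mp (lp.memℓp xf.2))
    (fun _ => lp.ext <| funext fun | 0 => rfl | _ + 1 => rfl) (fun _ => rfl)

end lp

namespace ContinuousLinearEquiv

section Absorb

variable {R A B C D : Type*} [Semiring R]
  [AddCommMonoid A] [Module R A] [TopologicalSpace A] [AddCommMonoid B] [Module R B]
  [TopologicalSpace B] [AddCommMonoid C] [Module R C] [TopologicalSpace C]
  [AddCommMonoid D] [Module R D] [TopologicalSpace D]

def absorbOfFactor (e : A ≃L[R] B × C) (f : B ≃L[R] D × B) : A ≃L[R] D × A :=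
  e.trans <| (f.prodCongr (.refl R C)).trans <|
    (prodAssoc R D B C).trans <| (ContinuousLinearEquiv.refl R D).prodCongr e.symm

end Absorb

variable {R X Y : Type*} [Ring R] [AddCommGroup X] [Module R X] [TopologicalSpace X]
  [AddCommGroup Y] [Module R Y] [TopologicalSpace Y]

def prodKerOfIdFactors [IsTopologicalAddGroup Y] {A B : X →L[R] X} {U : Y →L[R] X}
    {V : X →L[R] Y} (h : A ∘L (U ∘L V) ∘L B = ContinuousLinearMap.id R X) :
    Y ≃L[R] X × (A ∘L U).ker :=
  equivOfRightInverse (A ∘L U) (V ∘L B) fun x => congr($h x)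

theorem id_sub_conj_inl_fst [IsTopologicalAddGroup X] {Z : Type*} [AddCommGroup Z] [Module R Z]
    [TopologicalSpace Z] (e : X ≃L[R] Y × Z) :
    ContinuousLinearMap.id R X - ((e.symm : Y × Z →L[R] X) ∘L inl R Y Z) ∘L
        (fst R Y Z ∘L (e : X →L[R] Y × Z)) =
      ((e.symm : Y × Z →L[R] X) ∘L inr R Y Z) ∘L (snd R Y Z ∘L (e : X →L[R] Y × Z)) := by
  ext x
  apply e.injective
  ext <;> simp

end ContinuousLinearEquiv

theorem pelczynski_decomposition [Fact (1 ≤ p)] {X Y V W : Type*}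
    [NormedAddCommGroup X] [NormedSpace 𝕜 X] [CompleteSpace X]
    [NormedAddCommGroup Y] [NormedSpace 𝕜 Y] [CompleteSpace Y]
    [NormedAddCommGroup V] [NormedSpace 𝕜 V] [CompleteSpace V]
    [NormedAddCommGroup W] [NormedSpace 𝕜 W]
    (e0 : X ≃L[𝕜] lp (fun _ : ℕ => X) p) (e1 : X ≃L[𝕜] Y × V) (e2 : Y ≃L[𝕜] X × W) :
    Nonempty (X ≃L[𝕜] Y) := by
  let sumYV : X ≃L[𝕜] lp (fun _ : ℕ => Y) p × lp (fun _ : ℕ => V) p :=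
    e0.trans ((lp.congrCLE e1).trans lp.prodCLE)
  let squareX : X ≃L[𝕜] X × X :=
    e0.trans (lp.headTailCLE.trans ((ContinuousLinearEquiv.refl 𝕜 X).prodCongr e0.symm))
  let absorbY : X ≃L[𝕜] Y × X := sumYV.absorbOfFactor lp.headTailCLE
  let absorbX : Y ≃L[𝕜] X × Y := e2.absorbOfFactor squareX
  exact ⟨absorbY.trans ((ContinuousLinearEquiv.prodComm 𝕜 Y X).trans absorbX.symm)⟩

/-- Pełczyński's criterion. If a complex Banach space `X` is isomorphic to the
`ℓ_p`-sum of countably many copies of itself (`1 ≤ p ≤ ∞`), and for every bounded operator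
`T : X → X` the identity factors through `T` or through `I - T`, then `X` is primary. -/
theorem pelczynski_primary_criterion
    (X : Type) [NormedAddCommGroup X] [NormedSpace ℂ X] [CompleteSpace X]
    (p : ℝ≥0∞) [Fact (1 ≤ p)]
    (hsum : Nonempty (X ≃L[ℂ] lp (fun _ : ℕ => X) p))
    (hfac : ∀ T : X →L[ℂ] X,
      (∃ A B : X →L[ℂ] X, A ∘L T ∘L B = ContinuousLinearMap.id ℂ X) ∨
      (∃ A B : X →L[ℂ] X, A ∘L (ContinuousLinearMap.id ℂ X - T) ∘L B =
        ContinuousLinearMap.id ℂ X)) :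
    ∀ (Y Z : Type) [NormedAddCommGroup Y] [NormedSpace ℂ Y] [CompleteSpace Y]
      [NormedAddCommGroup Z] [NormedSpace ℂ Z] [CompleteSpace Z],
      Nonempty (X ≃L[ℂ] (Y × Z)) →
        Nonempty (X ≃L[ℂ] Y) ∨ Nonempty (X ≃L[ℂ] Z) := by
  intro Y Z _ _ _ _ _ _ ⟨e⟩
  obtain ⟨e0⟩ := hsum
  let projY : X →L[ℂ] X := (e.symm ∘L inl ℂ Y Z) ∘L (fst ℂ Y Z ∘L (e : X →L[ℂ] Y × Z))
  rcases hfac projY with ⟨A, B, hY⟩ | ⟨A, B, hZ⟩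
  · exact .inl (pelczynski_decomposition e0 e (.prodKerOfIdFactors hY))
  · rw [e.id_sub_conj_inl_fst] at hZ
    exact .inr <|
      pelczynski_decomposition e0 (e.trans (.prodComm ℂ Y Z)) (.prodKerOfIdFactors hZ)
end
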